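/- arXiv:2103.17034 — 2 statements merged into one kernel-verified Lean document; each statement's English description precedes it below -/
import Mathlib

section
/- Define P_i = (2/(i+1)) · Σ_{n=0}^∞ (−1)^n · (∏_{j=0}^{n} ((i+1)/2 − j)) / (n! · (2n+1)) for natural i ≥ 1. Then π = 2·i·P_i·P_{i−1} for every natural number i ≥ 2. -/
/-!
Expanding `(1 - x²)^b` by the binomial series and integrating term by term identifies `P i`
with `∫₀¹ (1 - x²)^((i-1)/2) dx`; the interchange is justified because `|C(b, n)| / (n + 1)` is
summable for `b > -1`. The substitution `x = sin θ` turns this integral into the Wallis integral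
`W i = ∫₀^{π/2} cos^i θ dθ`, and the reduction formula `W (n + 2) = (n + 1) / (n + 2) * W n`
makes `(n + 1) * W n * W (n + 1)` independent of `n`, hence equal to its value `π / 2` at `n = 0`.
-/

open Finset Real

noncomputable def P (i : ℕ) : ℝ :=
  (2 / ((i : ℝ) + 1)) *
    ∑' n : ℕ, (-1 : ℝ) ^ n *
      (∏ j ∈ Finset.range (n + 1), (((i : ℝ) + 1) / 2 - (j : ℝ))) /
        ((n.factorial : ℝ) * (2 * (n : ℝ) + 1))

open MeasureTheory Nat

section Choose

variable {K : Type*} [Field K] [CharZero K]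

theorem factorial_mul_choose_eq_prod_range (b : K) (n : ℕ) :
    (n ! : K) * Ring.choose b n = ∏ j ∈ range n, (b - j) := by
  rw [← nsmul_eq_mul, ← Ring.descPochhammer_eq_factorial_smul_choose,
    ← Polynomial.aeval_eq_smeval, Polynomial.aeval_def, ← Polynomial.eval_map, descPochhammer_map,
    descPochhammer_eval_eq_prod_range]

theorem succ_mul_choose_succ (b : K) (n : ℕ) :
    (n + 1 : K) * Ring.choose b (n + 1) = (b - n) * Ring.choose b n := by
  have hfac : (n ! : K) ≠ 0 := Nat.cast_ne_zero.mpr n.factorial_ne_zero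
  apply mul_left_cancel₀ hfac
  calc (n ! : K) * ((n + 1) * Ring.choose b (n + 1))
      = ((n + 1) ! : K) * Ring.choose b (n + 1) := by push_cast [factorial_succ]; ring
    _ = (b - n) * ((n ! : K) * Ring.choose b n) := by
      rw [factorial_mul_choose_eq_prod_range, factorial_mul_choose_eq_prod_range,
        prod_range_succ, mul_comm]
    _ = _ := by ring

end Choose

theorem abs_choose_succ {b : ℝ} {n : ℕ} (h : b ≤ n) :
    |Ring.choose b (n + 1)| = (n - b) / (n + 1) * |Ring.choose b n| := by
  have key := congrArg abs (succ_mul_choose_succ b n)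
  rw [abs_mul, abs_mul, abs_of_pos n.cast_add_one_pos, abs_sub_comm,
    abs_of_nonneg (sub_nonneg.mpr h)] at key
  field_simp
  linarith

/-- Beyond `n ≥ b`, `abs_choose_succ` makes `(b + 1) * |C(b, n)| / (n + 1)` equal to
`|C(b, n)| - |C(b, n + 1)|`, so the series telescopes. -/
theorem summable_abs_choose_div_succ {b : ℝ} (hb : -1 < b) :
    Summable fun n : ℕ ↦ |Ring.choose b n| / (n + 1) := by
  have hb1 : 0 < b + 1 := by linarith
  obtain ⟨N, hN⟩ := exists_nat_ge b
  rw [← summable_nat_add_iff N]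
  set u : ℕ → ℝ := fun m ↦ |Ring.choose b (m + N)|
  have telescope (m : ℕ) :
      |Ring.choose b (m + N)| / ((m + N : ℕ) + 1) = (u m - u (m + 1)) / (b + 1) := by
    have hle : b ≤ (m + N : ℕ) := hN.trans (by exact_mod_cast N.le_add_left m)
    simp only [u, add_right_comm m 1 N, abs_choose_succ hle]
    field_simp
    ring
  refine summable_of_sum_range_le (c := u 0 / (b + 1)) (fun _ ↦ by positivity) fun K ↦ ?_
  simp only [telescope, ← sum_div, sum_range_sub']
  gcongr
  exact sub_le_self _ (abs_nonneg _)

theorem hasSum_choose_mul_pow {a x : ℝ} (hx : |x| < 1) :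
    HasSum (fun n ↦ Ring.choose a n * x ^ n) ((1 + x) ^ a) := by
  have hx' : x ∈ Metric.eball 0 1 := by
    rwa [Metric.mem_eball, edist_zero_right, Real.enorm_eq_ofReal_abs, ENNReal.ofReal_lt_one]
  have := Real.one_add_rpow_hasFPowerSeriesOnBall_zero (a := a) |>.hasSum hx'
  simpa [-FormalMultilinearSeries.apply_eq_prod_smul_coeff, mul_comm] using this

theorem setIntegral_Ioo_mul_pow (c : ℝ) (n : ℕ) :
    ∫ x in Set.Ioo (0 : ℝ) 1, c * x ^ n = c / (n + 1) := by
  rw [← integral_Ioc_eq_integral_Ioo, ← intervalIntegral.integral_of_le zero_le_one,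
    intervalIntegral.integral_const_mul, integral_pow]
  simp [div_eq_mul_inv]

theorem hasSum_integral_one_sub_sq_rpow {b : ℝ} (hb : -1 < b) :
    HasSum (fun n : ℕ ↦ (-1) ^ n * Ring.choose b n / (2 * n + 1))
      (∫ x in (0 : ℝ)..1, (1 - x ^ 2) ^ b) := by
  set F : ℕ → ℝ → ℝ := fun n x ↦ Ring.choose b n * (-x ^ 2) ^ n
  have hF (n : ℕ) : F n = fun x ↦ ((-1) ^ n * Ring.choose b n) * x ^ (2 * n) := by
    ext x
    simp only [F]
    rw [neg_pow, ← pow_mul]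
    ring
  have hF_norm (n : ℕ) (x : ℝ) : ‖F n x‖ = |Ring.choose b n| * x ^ (2 * n) := by
    simp only [F, norm_mul, norm_pow, norm_neg, Real.norm_eq_abs, sq_abs, pow_mul]
  have hF_int (n : ℕ) : Integrable (F n) (volume.restrict (Set.Ioo 0 1)) :=
    (Continuous.integrableOn_Icc (by fun_prop)).mono_set Set.Ioo_subset_Icc_self
  have hF_sum : Summable fun n ↦ ∫ x in Set.Ioo (0 : ℝ) 1, ‖F n x‖ := by
    simp only [hF_norm, setIntegral_Ioo_mul_pow]
    refine (summable_abs_choose_div_succ hb).of_nonneg_of_le (fun _ ↦ by positivity) fun n ↦ ?_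
    gcongr
    linarith
  have hF_tsum : ∀ x ∈ Set.Ioo (0 : ℝ) 1, ∑' n, F n x = (1 - x ^ 2) ^ b := fun x hx ↦ by
    have hx2 : |-x ^ 2| < 1 := by
      rw [abs_neg, abs_of_nonneg (sq_nonneg x)]
      nlinarith [hx.1, hx.2]
    rw [(hasSum_choose_mul_pow hx2).tsum_eq, ← sub_eq_add_neg]
  have hF_integral (n : ℕ) :
      ∫ x in Set.Ioo (0 : ℝ) 1, F n x = (-1) ^ n * Ring.choose b n / (2 * n + 1) := by
    rw [hF, setIntegral_Ioo_mul_pow]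
    push_cast
    ring
  have := hasSum_integral_of_summable_integral_norm hF_int hF_sum
  rw [setIntegral_congr_fun measurableSet_Ioo hF_tsum] at this
  rw [intervalIntegral.integral_of_le zero_le_one, integral_Ioc_eq_integral_Ioo]
  simpa only [hF_integral] using this

theorem P_eq_tsum (i : ℕ) :
    P i = ∑' n : ℕ, (-1) ^ n * Ring.choose (((i : ℝ) - 1) / 2) n / (2 * n + 1) := by
  rw [P, ← tsum_mul_left]
  congr 1
  ext n
  have hprod : ∏ j ∈ range (n + 1), (((i : ℝ) + 1) / 2 - j)
      = ((i : ℝ) + 1) / 2 * ((n ! : ℝ) * Ring.choose (((i : ℝ) - 1) / 2) n) := by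
    rw [prod_range_succ', factorial_mul_choose_eq_prod_range, mul_comm]
    push_cast
    congr 1
    · ring
    · exact prod_congr rfl fun j _ ↦ by ring
  rw [hprod]
  field_simp

theorem P_eq_integral (i : ℕ) : P i = ∫ x in (0 : ℝ)..1, (1 - x ^ 2) ^ (((i : ℝ) - 1) / 2) := by
  rw [P_eq_tsum, (hasSum_integral_one_sub_sq_rpow _).tsum_eq]
  linarith [(i.cast_nonneg : (0 : ℝ) ≤ i)]

theorem integral_one_sub_sq_rpow_half_eq_integral_cos_pow (m : ℕ) :
    ∫ x in (0 : ℝ)..1, (1 - x ^ 2) ^ ((m : ℝ) / 2) = ∫ θ in (0 : ℝ)..π / 2, cos θ ^ (m + 1) := by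
  have hg : Continuous fun x : ℝ ↦ (1 - x ^ 2) ^ ((m : ℝ) / 2) := by
    fun_prop (disch := positivity)
  have := intervalIntegral.integral_comp_mul_deriv (a := 0) (b := π / 2) (f := sin) (f' := cos)
    (fun x _ ↦ hasDerivAt_sin x) continuous_cos.continuousOn hg
  rw [sin_zero, sin_pi_div_two] at this
  rw [← this]
  refine intervalIntegral.integral_congr fun θ hθ ↦ ?_
  rw [Set.uIcc_of_le (by positivity)] at hθ
  have hcos : 0 ≤ cos θ := cos_nonneg_of_mem_Icc ⟨by linarith [hθ.1, pi_pos], hθ.2⟩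
  rw [Function.comp_apply, ← cos_sq', ← rpow_natCast_mul hcos, Nat.cast_ofNat,
    mul_div_cancel₀ _ two_ne_zero, rpow_natCast, pow_succ]

theorem P_succ_eq_integral_cos_pow (m : ℕ) : P (m + 1) = ∫ θ in (0 : ℝ)..π / 2, cos θ ^ (m + 1) := by
  rw [P_eq_integral, ← integral_one_sub_sq_rpow_half_eq_integral_cos_pow]
  push_cast
  rw [add_sub_cancel_right]

theorem integral_cos_pow_succ_succ_zero_pi_div_two (n : ℕ) :
    ∫ θ in (0 : ℝ)..π / 2, cos θ ^ (n + 2) = (n + 1) / (n + 2) * ∫ θ in (0 : ℝ)..π / 2, cos θ ^ n := by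
  simp [integral_cos_pow]

theorem succ_mul_integral_cos_pow_mul_integral_cos_pow_succ (n : ℕ) :
    (n + 1) * (∫ θ in (0 : ℝ)..π / 2, cos θ ^ n) * ∫ θ in (0 : ℝ)..π / 2, cos θ ^ (n + 1) =
      π / 2 := by
  induction n with
  | zero => simp
  | succ n ih =>
    rw [integral_cos_pow_succ_succ_zero_pi_div_two]
    push_cast
    field_simp
    linear_combination 2 * (n + 2 : ℝ) * ih

theorem stmt_2 (i : ℕ) (hi : 2 ≤ i) : π = 2 * (i : ℝ) * P i * P (i - 1) := by
  obtain ⟨m, rfl⟩ : ∃ m, i = m + 1 + 1 := ⟨i - 2, by omega⟩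
  have wallis := succ_mul_integral_cos_pow_mul_integral_cos_pow_succ (m + 1)
  rw [Nat.add_sub_cancel, P_succ_eq_integral_cos_pow, P_succ_eq_integral_cos_pow]
  push_cast at wallis ⊢
  linear_combination -2 * wallis
end

section
/- The two expressions (2/i)·Σ_{n=0}^∞ (−1)^n · (∏_{j=0}^{n} (i/2 − j)) / (n!·(2n+1)) and 1 + Σ_{n=1}^∞ (−1)^n · (∏_{j=1}^{n} ((i+1)/(2j) − 1)) / (2n+1), evaluated with i replaced by i−1 in the first, are equal; i.e., P_{i−1} defined via Equation 12 agrees with P_{i−1} defined via Equation 20. -/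
/-!
Write `Q r n = ∏_{j=1}^n (r/(2j) - 1)`. Pulling the factor `j + 1` out of each factor
`r/2 - (j + 1)` gives `∏_{j=0}^n (r/2 - j) = (r/2) · n! · Q r n`, so the series of Equation 12
is `r/2` times `∑ (-1)^n Q r n / (2n+1)`, whose `n = 0` term is `1`: this is Equation 20.
For `r ≥ 2` the factors of `Q r n` with `2j ≥ r` have absolute value at most `(j-1)/j`, so
`|Q r n| = O(1/n)`, the terms are `O(1/n²)`, and the series converges absolutely.
-/

open Finset

namespace HalfBinomialSeries

/-- The paper's `Q_{i-1,n}`, with `r = i`. -/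
noncomputable def Q (r : ℝ) (n : ℕ) : ℝ :=
  ∏ j ∈ Icc 1 n, (r / (2 * j) - 1)

noncomputable def term (r : ℝ) (n : ℕ) : ℝ :=
  (-1) ^ n * Q r n / (2 * n + 1)

@[simp]
lemma Q_zero (r : ℝ) : Q r 0 = 1 := by
  simp [Q]

lemma Q_succ (r : ℝ) (n : ℕ) : Q r (n + 1) = Q r n * (r / (2 * (n + 1)) - 1) := by
  rw [Q, prod_Icc_succ_top (Nat.le_add_left 1 n), Q]
  push_cast
  rfl

@[simp]
lemma term_zero (r : ℝ) : term r 0 = 1 := by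
  simp [term]

lemma prod_range_half_sub (r : ℝ) (n : ℕ) :
    ∏ j ∈ range (n + 1), (r / 2 - j) = r / 2 * n.factorial * Q r n := by
  induction n with
  | zero => simp
  | succ n ih =>
    rw [prod_range_succ, ih, Q_succ, Nat.factorial_succ]
    push_cast
    field_simp

lemma abs_Q_succ_mul_le {r : ℝ} (hr : 2 ≤ r) {n : ℕ} (hrn : r ≤ 2 * (n + 1)) :
    |Q r (n + 1)| * (n + 1) ≤ |Q r n| * n := by
  have hn : (0 : ℝ) < n + 1 := by positivity
  have hfactor : |r / (2 * (n + 1)) - 1| * (n + 1) ≤ n := by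
    rw [abs_of_nonpos (by rw [sub_nonpos, div_le_one (by positivity)]; exact hrn)]
    have : r / (2 * (n + 1)) * (n + 1) = r / 2 := by field_simp
    linarith
  rw [Q_succ, abs_mul, mul_assoc]
  exact mul_le_mul_of_nonneg_left hfactor (abs_nonneg _)

lemma abs_Q_mul_le {r : ℝ} (hr : 2 ≤ r) {N : ℕ} (hrN : r ≤ 2 * N) {n : ℕ} (hNn : N ≤ n) :
    |Q r n| * n ≤ |Q r N| * N := by
  induction n, hNn using Nat.le_induction with
  | base => exact le_rfl
  | succ n hNn ih =>
    have hrn : r ≤ 2 * ((n : ℝ) + 1) := by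
      have : (N : ℝ) ≤ n := by exact_mod_cast hNn
      linarith
    push_cast
    exact (abs_Q_succ_mul_le hr hrn).trans ih

lemma summable_term {r : ℝ} (hr : 2 ≤ r) : Summable (term r) := by
  set N := ⌈r / 2⌉₊ + 1
  have hrN : r ≤ 2 * N := by
    have := Nat.le_ceil (r / 2)
    simp only [N]
    push_cast
    linarith
  set C := |Q r N| * N
  refine Summable.of_norm_bounded_eventually_nat (g := fun n : ℕ => C * (1 / (n : ℝ) ^ 2))
    ((Real.summable_one_div_nat_pow.mpr one_lt_two).mul_left C) ?_
  filter_upwards [Filter.eventually_ge_atTop N] with n hNn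
  have hn : (0 : ℝ) < n := by exact_mod_cast ((Nat.succ_pos _).trans_le hNn)
  have hQ : |Q r n| ≤ C / n := (le_div_iff₀ hn).mpr (abs_Q_mul_le hr hrN hNn)
  calc ‖term r n‖ = |Q r n| / (2 * n + 1) := by
        rw [term, Real.norm_eq_abs, abs_div, abs_mul, abs_pow, abs_neg, abs_one, one_pow, one_mul,
          abs_of_pos (by positivity : (0 : ℝ) < 2 * n + 1)]
    _ ≤ C / n / n := by gcongr; linarith
    _ = C * (1 / (n : ℝ) ^ 2) := by ring

lemma eq12_term_eq (r : ℝ) (n : ℕ) :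
    (-1 : ℝ) ^ n * (∏ j ∈ range (n + 1), (r / 2 - j)) / (n.factorial * (2 * n + 1)) =
      r / 2 * term r n := by
  rw [prod_range_half_sub, term]
  have : (n.factorial : ℝ) ≠ 0 := by exact_mod_cast n.factorial_ne_zero
  field_simp

end HalfBinomialSeries

open HalfBinomialSeries in
theorem stmt_10 (i : ℕ) (hi : 2 ≤ i) :
    (2 / (i : ℝ)) *
      ∑' n : ℕ, (-1 : ℝ) ^ n *
        (∏ j ∈ Finset.range (n + 1), ((i : ℝ) / 2 - (j : ℝ))) /
          ((n.factorial : ℝ) * (2 * (n : ℝ) + 1)) =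
    1 + ∑' n : ℕ, (-1 : ℝ) ^ (n + 1) *
      (∏ j ∈ Finset.Icc 1 (n + 1), ((i : ℝ) / (2 * (j : ℝ)) - 1)) /
        (2 * ((n : ℝ) + 1) + 1) := by
  have hi2 : (2 : ℝ) ≤ i := by exact_mod_cast hi
  rw [tsum_congr (eq12_term_eq i), tsum_mul_left, (summable_term hi2).tsum_eq_zero_add,
    term_zero, ← mul_assoc, div_mul_div_cancel₀ (by positivity), div_self two_ne_zero, one_mul]
  congr 1
  refine tsum_congr fun n => ?_
  rw [term, Q]
  push_cast
  rfl
end
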